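/- arXiv:1709.05474 — 3 statements merged into one kernel-verified Lean document; each statement's English description precedes it below -/
import Mathlib

section
/- Let k > 0, ε > 0, let a ∈ {1, −1}, let c ∈ ℝ, and let n ∈ ℝ² be a unit vector. Define u = k·(c·n + a·(√3·ε/2)·(J n)) and σ = ⟪u, J n⟫ / ‖u‖. Then ‖u‖ = k·√(c² + 3ε²/4), and σ satisfies 0 < a·σ ≤ 1; that is, |σ| ∈ (0, 1] and the sign of σ equals a. Moreover a·σ = 1 if and only if c = 0. -/
open RealInnerProductSpace

/-- Counterclockwise rotation by π/2 in the Euclidean plane. -/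
noncomputable def J (p : EuclideanSpace ℝ (Fin 2)) : EuclideanSpace ℝ (Fin 2) :=
  WithLp.toLp 2 ![-p 1, p 0]

/-! Since `n` and `J n` are orthonormal, `u / k` has coordinates `(c, a b)` with `b = √3 ε / 2`
in that frame, so `‖u‖ = k √(c² + b²)` and `⟪u, J n⟫ = k a b`. As `a² = 1`, `a σ = b / √(c² + b²)`,
which lies in `(0, 1]` because `b > 0`, and equals `1` exactly when `c = 0`. -/

section Orthonormal

variable {E : Type*} [NormedAddCommGroup E] [InnerProductSpace ℝ E] {e f : E}

theorem norm_smul_add_smul_of_orthonormal (he : ‖e‖ = 1) (hf : ‖f‖ = 1) (hef : ⟪e, f⟫ = 0)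
    (α β : ℝ) : ‖α • e + β • f‖ = √(α ^ 2 + β ^ 2) := by
  have horth : ⟪α • e, β • f⟫ = 0 := by
    rw [real_inner_smul_left, real_inner_smul_right, hef, mul_zero, mul_zero]
  rw [norm_add_eq_sqrt_iff_real_inner_eq_zero.mpr horth, norm_smul, norm_smul, he, hf,
    mul_one, mul_one, Real.norm_eq_abs, Real.norm_eq_abs, abs_mul_abs_self, abs_mul_abs_self,
    sq, sq]

theorem inner_smul_add_smul_right_of_orthonormal (hf : ‖f‖ = 1) (hef : ⟪e, f⟫ = 0)
    (α β : ℝ) : ⟪α • e + β • f, f⟫ = β := by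
  rw [inner_add_left, real_inner_smul_left, real_inner_smul_left, hef,
    real_inner_self_eq_norm_sq, hf]
  ring

end Orthonormal

theorem norm_J (p : EuclideanSpace ℝ (Fin 2)) : ‖J p‖ = ‖p‖ := by
  simp only [EuclideanSpace.norm_eq, Fin.sum_univ_two, J, Matrix.cons_val_zero,
    Matrix.cons_val_one, Real.norm_eq_abs, sq_abs, neg_sq]
  rw [add_comm]

theorem inner_J_right_self (p : EuclideanSpace ℝ (Fin 2)) : ⟪p, J p⟫ = 0 := by
  simp only [PiLp.inner_apply, Fin.sum_univ_two, J, Matrix.cons_val_zero, Matrix.cons_val_one,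
    RCLike.inner_apply, conj_trivial]
  ring

section SqrtSqAddSq

variable {b : ℝ}

theorem div_sqrt_sq_add_sq_pos (c : ℝ) (hb : 0 < b) : 0 < b / √(c ^ 2 + b ^ 2) := by
  positivity

theorem div_sqrt_sq_add_sq_le_one (c : ℝ) (hb : 0 < b) : b / √(c ^ 2 + b ^ 2) ≤ 1 := by
  rw [div_le_one (by positivity)]
  exact Real.le_sqrt_of_sq_le (le_add_of_nonneg_left (sq_nonneg c))

theorem div_sqrt_sq_add_sq_eq_one_iff (c : ℝ) (hb : 0 < b) :
    b / √(c ^ 2 + b ^ 2) = 1 ↔ c = 0 := by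
  rw [div_eq_one_iff_eq (by positivity), eq_comm,
    Real.sqrt_eq_iff_eq_sq (by positivity) hb.le]
  constructor
  · intro h
    exact pow_eq_zero_iff two_ne_zero |>.mp (by linarith)
  · rintro rfl
    ring

end SqrtSqAddSq

/-- Theorem 1 (nonzero rate of progress): the rate of progress σ along the obstacle
boundary satisfies |σ| ∈ (0, 1] with sign equal to a, and a σ = 1 iff c = 0. -/
theorem wall_following_rate_of_progress
    (k ε : ℝ) (hk : 0 < k) (hε : 0 < ε)
    (a : ℝ) (ha : a = 1 ∨ a = -1) (c : ℝ)
    (n : EuclideanSpace ℝ (Fin 2)) (hn : ‖n‖ = 1)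
    (u : EuclideanSpace ℝ (Fin 2))
    (hu : u = k • (c • n + (a * (Real.sqrt 3 * ε / 2)) • J n))
    (σ : ℝ) (hσ : σ = ⟪u, J n⟫ / ‖u‖) :
    ‖u‖ = k * Real.sqrt (c ^ 2 + 3 * ε ^ 2 / 4) ∧
      0 < a * σ ∧ a * σ ≤ 1 ∧ (a * σ = 1 ↔ c = 0) := by
  set b := Real.sqrt 3 * ε / 2
  have hb : 0 < b := by positivity
  have ha2 : a ^ 2 = 1 := by rcases ha with rfl | rfl <;> norm_num
  have hb2 : b ^ 2 = 3 * ε ^ 2 / 4 := by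
    rw [div_pow, mul_pow, Real.sq_sqrt zero_le_three]
    ring
  have hJn : ‖J n‖ = 1 := (norm_J n).trans hn
  have hnorm : ‖u‖ = k * √(c ^ 2 + b ^ 2) := by
    rw [hu, norm_smul, Real.norm_of_nonneg hk.le,
      norm_smul_add_smul_of_orthonormal hn hJn (inner_J_right_self n), mul_pow, ha2, one_mul]
  have hinner : ⟪u, J n⟫ = k * (a * b) := by
    rw [hu, real_inner_smul_left,
      inner_smul_add_smul_right_of_orthonormal hJn (inner_J_right_self n)]
  have hσ' : a * σ = b / √(c ^ 2 + b ^ 2) := by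
    rw [hσ, hinner, hnorm, ← mul_div_assoc, show a * (k * (a * b)) = k * (a ^ 2 * b) by ring,
      ha2, one_mul, mul_div_mul_left _ _ hk.ne']
  rw [hσ', ← hb2]
  exact ⟨hnorm, div_sqrt_sq_add_sq_pos c hb, div_sqrt_sq_add_sq_le_one c hb,
    div_sqrt_sq_add_sq_eq_one_iff c hb⟩
end

section
/- Let O be a nonempty closed convex subset of ℝ², and let Π : ℝ² → ℝ² be its metric projection, i.e. Π(x) ∈ O and ‖x − Π(x)‖ ≤ ‖x − y‖ for every y ∈ O (such a map exists and is unique, and is 1-Lipschitz). Let k, ε, r > 0, a ∈ {1, −1}, δ > 0, and let S = {x ∈ ℝ² : infDist(x, O) ≥ δ}. Define, for x ∈ S, n(x) = (x − Π(x))/‖x − Π(x)‖ and u(x) = k·((ε/2 + r − ‖x − Π(x)‖)·n(x) + a·(√3·ε/2)·(J n(x))). Then there exists L ≥ 0 such that u is Lipschitz on S with constant L. -/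
/-!
The metric projection onto a convex set satisfies the variational inequality
`⟪x - Π x, w - Π x⟫ ≤ 0` for `w ∈ O`; adding it at `x` and at `y` gives
`‖Π x - Π y‖² ≤ ⟪x - y, Π x - Π y⟫`, so `Π` is 1-Lipschitz and `x ↦ x - Π x` is 2-Lipschitz.
On `S` this map has norm at least `δ`, where normalisation `v ↦ v / ‖v‖` is `2/δ`-Lipschitz.
Since `‖x - Π x‖ • n x = x - Π x`, the field is `u = k • (c • n - (id - Π) + b • J ∘ n)`,
a linear combination of Lipschitz maps (`J` being an isometry).
-/

open Metric

open scoped InnerProductSpace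

section MetricProjection

variable {F : Type*} [NormedAddCommGroup F] [InnerProductSpace ℝ F] {K : Set F} {proj : F → F}

theorem inner_sub_proj_sub_proj_nonpos (hK : Convex ℝ K) (hmem : ∀ x, proj x ∈ K)
    (hnear : ∀ x, ∀ y ∈ K, ‖x - proj x‖ ≤ ‖x - y‖) (x : F) :
    ∀ w ∈ K, ⟪x - proj x, w - proj x⟫_ℝ ≤ 0 := by
  have : Nonempty K := ⟨⟨proj x, hmem x⟩⟩
  refine (norm_eq_iInf_iff_real_inner_le_zero hK (hmem x)).mp (le_antisymm ?_ ?_)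
  · exact le_ciInf fun w => hnear x w w.2
  · exact ciInf_le ⟨0, by rintro _ ⟨w, rfl⟩; positivity⟩ (⟨proj x, hmem x⟩ : K)

theorem lipschitzWith_one_of_inner_sub_proj_nonpos (hmem : ∀ x, proj x ∈ K)
    (hvi : ∀ x, ∀ w ∈ K, ⟪x - proj x, w - proj x⟫_ℝ ≤ 0) : LipschitzWith 1 proj := by
  refine LipschitzWith.of_dist_le_mul fun x y => ?_
  rw [NNReal.coe_one, one_mul, dist_eq_norm, dist_eq_norm]
  set p := proj x - proj y with hp
  have hx := hvi x (proj y) (hmem y)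
  have hy := hvi y (proj x) (hmem x)
  have hsq : ‖p‖ ^ 2 ≤ ⟪x - y, p⟫_ℝ := by
    have hxy : x - y = (x - proj x) - (y - proj y) + p := by rw [hp]; abel
    have hpx : proj y - proj x = -p := by rw [hp]; abel
    rw [hpx, inner_neg_right] at hx
    rw [hxy, inner_add_left, inner_sub_left, real_inner_self_eq_norm_sq]
    linarith
  have := hsq.trans (real_inner_le_norm (x - y) p)
  nlinarith [norm_nonneg p, norm_nonneg (x - y)]

end MetricProjection

section Normalize

variable {E : Type*} [NormedAddCommGroup E] [NormedSpace ℝ E]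

theorem norm_inv_norm_smul_sub_inv_norm_smul_le {x y : E} (hx : x ≠ 0) (hy : y ≠ 0) :
    ‖‖x‖⁻¹ • x - ‖y‖⁻¹ • y‖ ≤ 2 * ‖x - y‖ / ‖x‖ := by
  have hx' : ‖x‖ ≠ 0 := norm_ne_zero_iff.2 hx
  have hy' : ‖y‖ ≠ 0 := norm_ne_zero_iff.2 hy
  have key : ‖x‖⁻¹ • x - ‖y‖⁻¹ • y = ‖x‖⁻¹ • ((x - y) + (‖y‖ - ‖x‖) • (‖y‖⁻¹ • y)) := by
    rw [sub_smul, smul_inv_smul₀ hy', smul_smul, sub_add_sub_cancel, smul_sub, smul_smul,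
      ← mul_assoc, inv_mul_cancel₀ hx', one_mul]
  calc ‖‖x‖⁻¹ • x - ‖y‖⁻¹ • y‖
      ≤ ‖x‖⁻¹ * (‖x - y‖ + |‖y‖ - ‖x‖| * ‖‖y‖⁻¹ • y‖) := by
        rw [key, norm_smul, norm_inv, norm_norm]
        gcongr
        refine (norm_add_le _ _).trans ?_
        rw [norm_smul, Real.norm_eq_abs]
    _ ≤ ‖x‖⁻¹ * (‖x - y‖ + ‖x - y‖ * 1) := by
        rw [norm_smul, norm_inv, norm_norm, inv_mul_cancel₀ hy', abs_sub_comm]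
        gcongr
        exact abs_norm_sub_norm_le x y
    _ = 2 * ‖x - y‖ / ‖x‖ := by ring

theorem lipschitzOnWith_inv_norm_smul {δ : ℝ} (hδ : 0 < δ) :
    LipschitzOnWith (2 / δ).toNNReal (fun v : E => ‖v‖⁻¹ • v) {v | δ ≤ ‖v‖} := by
  refine LipschitzOnWith.of_dist_le' fun x (hx : δ ≤ ‖x‖) y (hy : δ ≤ ‖y‖) => ?_
  have hx0 : x ≠ 0 := norm_pos_iff.1 (hδ.trans_le hx)
  have hy0 : y ≠ 0 := norm_pos_iff.1 (hδ.trans_le hy)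
  rw [dist_eq_norm, dist_eq_norm]
  calc _ ≤ 2 * ‖x - y‖ / ‖x‖ := norm_inv_norm_smul_sub_inv_norm_smul_le hx0 hy0
    _ ≤ 2 * ‖x - y‖ / δ := by gcongr
    _ = 2 / δ * ‖x - y‖ := by ring

end Normalize

theorem isometry_J : Isometry J := by
  refine Isometry.of_dist_eq fun p q => ?_
  simp only [EuclideanSpace.dist_eq, Fin.sum_univ_two, J, Matrix.cons_val_zero,
    Matrix.cons_val_one, Real.dist_eq, sq_abs]
  ring_nf

theorem wall_following_law_lipschitz_general
    (O : Set (EuclideanSpace ℝ (Fin 2)))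
    (hOconv : Convex ℝ O)
    (proj : EuclideanSpace ℝ (Fin 2) → EuclideanSpace ℝ (Fin 2))
    (hprojmem : ∀ x, proj x ∈ O)
    (hprojnear : ∀ x, ∀ y ∈ O, ‖x - proj x‖ ≤ ‖x - y‖)
    (k ε r δ : ℝ) (hδ : 0 < δ)
    (a : ℝ)
    (S : Set (EuclideanSpace ℝ (Fin 2)))
    (hS : S = {x | δ ≤ infDist x O})
    (n u : EuclideanSpace ℝ (Fin 2) → EuclideanSpace ℝ (Fin 2))
    (hn : ∀ x ∈ S, n x = ‖x - proj x‖⁻¹ • (x - proj x))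
    (hu : ∀ x ∈ S, u x = k • ((ε / 2 + r - ‖x - proj x‖) • n x +
      (a * (Real.sqrt 3 * ε / 2)) • J (n x))) :
    ∃ L : NNReal, LipschitzOnWith L u S := by
  set c := ε / 2 + r
  set b := a * (Real.sqrt 3 * ε / 2)
  have hproj : LipschitzWith 1 proj := lipschitzWith_one_of_inner_sub_proj_nonpos hprojmem
    (inner_sub_proj_sub_proj_nonpos hOconv hprojmem hprojnear)
  have hf : LipschitzWith (1 + 1) fun x => x - proj x := LipschitzWith.id.sub hproj
  have hfS : Set.MapsTo (fun x => x - proj x) S {v | δ ≤ ‖v‖} := by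
    rintro x hx
    rw [hS] at hx
    exact hx.trans ((infDist_le_dist_of_mem (hprojmem x)).trans_eq (dist_eq_norm _ _))
  have hnS := (lipschitzOnWith_inv_norm_smul hδ).comp hf.lipschitzOnWith hfS
  have hv : LipschitzOnWith _ (fun x => k • (c • (‖x - proj x‖⁻¹ • (x - proj x)) - (x - proj x)
      + b • J (‖x - proj x‖⁻¹ • (x - proj x)))) S :=
    (lipschitzWith_smul k).comp_lipschitzOnWith
      ((((lipschitzWith_smul c).comp_lipschitzOnWith hnS).sub hf.lipschitzOnWith).add
        ((lipschitzWith_smul b).comp_lipschitzOnWith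
          (isometry_J.lipschitz.comp_lipschitzOnWith hnS)))
  have hu' : ∀ x ∈ S, u x = k • (c • (‖x - proj x‖⁻¹ • (x - proj x)) - (x - proj x)
      + b • J (‖x - proj x‖⁻¹ • (x - proj x))) := fun x hx => by
    have hx0 : ‖x - proj x‖ ≠ 0 := (hδ.trans_le (hfS hx)).ne'
    rw [hu x hx, hn x hx, sub_smul, smul_inv_smul₀ hx0]
  exact ⟨_, fun x hx y hy => by simpa only [hu' x hx, hu' y hy] using hv hx hy⟩

/-- Proposition 1(i)–(ii) regularity claim: away from the obstacle (at distance at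
least δ > 0), the wall-following vector field is Lipschitz continuous. -/
theorem wall_following_law_lipschitz
    (O : Set (EuclideanSpace ℝ (Fin 2))) (hO : O.Nonempty)
    (hOc : IsClosed O) (hOconv : Convex ℝ O)
    (proj : EuclideanSpace ℝ (Fin 2) → EuclideanSpace ℝ (Fin 2))
    (hprojmem : ∀ x, proj x ∈ O)
    (hprojnear : ∀ x, ∀ y ∈ O, ‖x - proj x‖ ≤ ‖x - y‖)
    (k ε r δ : ℝ) (hk : 0 < k) (hε : 0 < ε) (hr : 0 < r) (hδ : 0 < δ)
    (a : ℝ) (ha : a = 1 ∨ a = -1)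
    (S : Set (EuclideanSpace ℝ (Fin 2)))
    (hS : S = {x | δ ≤ infDist x O})
    (n u : EuclideanSpace ℝ (Fin 2) → EuclideanSpace ℝ (Fin 2))
    (hn : ∀ x ∈ S, n x = ‖x - proj x‖⁻¹ • (x - proj x))
    (hu : ∀ x ∈ S, u x = k • ((ε / 2 + r - ‖x - proj x‖) • n x +
      (a * (Real.sqrt 3 * ε / 2)) • J (n x))) :
    ∃ L : NNReal, LipschitzOnWith L u S :=
  wall_following_law_lipschitz_general O hOconv proj hprojmem hprojnear k ε r δ hδ a S hS n u hn hu
end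

section
/- Let ι be an index set, and for each i ∈ ι let O_i be a nonempty closed subset of ℝ². Let r > 0, ε > 0, and η > 2(r + ε), and suppose that for all i ≠ j and all a ∈ O_i, b ∈ O_j, dist(a, b) ≥ η. Let T > 0 and let γ : [0, T] → ℝ² be continuous. Suppose that for every t ∈ [0, T] there exists i ∈ ι with infDist(γ(t), O_i) < r + ε, and that infDist(γ(0), O_k) < r + ε for a fixed k ∈ ι. Then infDist(γ(t), O_k) < r + ε for all t ∈ [0, T]; in particular, for every t ∈ [0, T] and every i ≠ k, infDist(γ(t), O_i) > r + ε, so O_k is the unique closest obstacle to γ(t) throughout. -/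
open Metric

/-- If `x` is within `r + ε` of `O k`, then it is farther than `r + ε` from every
other obstacle. -/
theorem aux_far_from_others
    {ι : Type*} (O : ι → Set (EuclideanSpace ℝ (Fin 2)))
    (hOne : ∀ i, (O i).Nonempty)
    (r ε η : ℝ) (hη : 2 * (r + ε) < η)
    (hsep : ∀ i j, i ≠ j → ∀ a ∈ O i, ∀ b ∈ O j, η ≤ dist a b)
    (k : ι) (x : EuclideanSpace ℝ (Fin 2)) (hx : infDist x (O k) < r + ε) :
    ∀ i, i ≠ k → r + ε < infDist x (O i) := by
  intro i hik
  obtain ⟨a, haO, hax⟩ := (infDist_lt_iff (hOne k)).1 hx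
  have hle : η - dist x a ≤ infDist x (O i) := by
    by_contra hc
    push_neg at hc
    obtain ⟨b, hb, hxb⟩ := (infDist_lt_iff (hOne i)).1 hc
    have h1 : η ≤ dist a b := hsep k i (Ne.symm hik) a haO b hb
    have h2 : dist a b ≤ dist a x + dist x b := dist_triangle a x b
    rw [dist_comm a x] at h2
    linarith
  linarith

/-- Proposition 2 of the paper (persistence of the followed obstacle): a continuous
trajectory that always stays within distance r + ε of some obstacle, and starts
within distance r + ε of obstacle O_k, remains within distance r + ε of O_k for all
time, and so O_k stays the unique closest obstacle. -/
theorem followed_obstacle_persists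
    {ι : Type*} (O : ι → Set (EuclideanSpace ℝ (Fin 2)))
    (hOne : ∀ i, (O i).Nonempty) (hOc : ∀ i, IsClosed (O i))
    (r ε η : ℝ) (hr : 0 < r) (hε : 0 < ε) (hη : 2 * (r + ε) < η)
    (hsep : ∀ i j, i ≠ j → ∀ a ∈ O i, ∀ b ∈ O j, η ≤ dist a b)
    (T : ℝ) (hT : 0 < T)
    (γ : ℝ → EuclideanSpace ℝ (Fin 2)) (hγ : ContinuousOn γ (Set.Icc 0 T))
    (hclose : ∀ t ∈ Set.Icc (0 : ℝ) T, ∃ i, infDist (γ t) (O i) < r + ε)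
    (k : ι) (hstart : infDist (γ 0) (O k) < r + ε) :
    ∀ t ∈ Set.Icc (0 : ℝ) T,
      infDist (γ t) (O k) < r + ε ∧
        ∀ i, i ≠ k → r + ε < infDist (γ t) (O i) := by
  intro t ht
  have hmain : infDist (γ t) (O k) < r + ε := by
    by_contra hcon
    push_neg at hcon
    -- f is continuous on [0, t]
    set f : ℝ → ℝ := fun s => infDist (γ s) (O k) with hf
    have hfc : ContinuousOn f (Set.Icc 0 t) := by
      apply ((continuous_infDist_pt (O k)).comp_continuousOn)
      exact hγ.mono (Set.Icc_subset_Icc le_rfl ht.2)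
    have hsub : Set.Icc (r + ε) (r + ε) ⊆ Set.Icc (f 0) (f t) := by
      apply Set.Icc_subset_Icc hstart.le hcon
    have hiv := intermediate_value_Icc ht.1 hfc
    obtain ⟨t0, ht0, hft0⟩ := hiv (hsub ⟨le_rfl, le_rfl⟩)
    have ht0T : t0 ∈ Set.Icc (0 : ℝ) T := ⟨ht0.1, ht0.2.trans ht.2⟩
    obtain ⟨i, hi⟩ := hclose t0 ht0T
    have hft0' : infDist (γ t0) (O k) = r + ε := hft0
    rcases eq_or_ne i k with rfl | hik
    · rw [hft0'] at hi; exact lt_irrefl _ hi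
    · have := aux_far_from_others O hOne r ε η hη hsep i (γ t0)
        hi k (Ne.symm hik)
      rw [hft0'] at this
      exact lt_irrefl _ this
  exact ⟨hmain, aux_far_from_others O hOne r ε η hη hsep k (γ t) hmain⟩
end
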